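/- Let h(x) = ∑_{k≥0} c_{2k+1} x^{2k+1} with c₁ > 0, c_{2k+1} ≤ 0 for k > 0, and ∑_k c_{2k+1} = 1. Then the coefficients d_{2k+1} of the compositional inverse of h satisfy 0 ≤ d_{2k+1} ≤ 1/(2k+1) for all k ≥ 0. -/

import Mathlib

/-!
As formal power series `h = X S` with `S = c₁ + c₃ X² + c₅ X⁴ + ⋯`, and Lagrange inversion gives
`(2k+1) d_{2k+1} = [X^{2k}] S^{-(2k+1)}`. Writing `S = c₁ - X U`, the coefficients of `U` are
nonnegative with total mass `c₁ - 1`, so the recursion `c₁ S⁻¹ = 1 + X U S⁻¹` shows that `S⁻¹`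
has nonnegative coefficients whose partial sums are at most `1`. Both properties survive
products, hence `0 ≤ [X^{2k}] S^{-(2k+1)} ≤ 1`.

The analytic hypotheses only serve to identify the `d_{2k+1}` with the coefficients of the formal
compositional inverse: truncating both series at order `N` turns `d ∘ h = id` into a polynomial
identity up to `O(x^N)` near `0`, hence up to a multiple of `X^N`.
-/

open Filter Topology Asymptotics FormalMultilinearSeries
open scoped ENNReal NNReal

namespace PowerSeries

open Finset

section Lagrange

variable {K : Type*} [Field K] [CharZero K] {S : K⟦X⟧}

theorem coeff_derivative_X_mul_mul_inv_pow (hS : constantCoeff S ≠ 0) (r : ℕ) :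
    coeff r (d⁄dX K (X * S) * S⁻¹ ^ (r + 1)) = if r = 0 then 1 else 0 := by
  have hDXS : d⁄dX K (X * S) = S + X * d⁄dX K S := by
    rw [Derivation.leibniz, derivative_X, smul_eq_mul, smul_eq_mul, mul_one, add_comm]
  rcases r with _ | r
  · simp [hDXS, hS]
  · -- `(X S)' S⁻¹ ^ (r + 2) = S⁻¹ ^ (r + 1) - X (S⁻¹ ^ (r + 1))' / (r + 1)`, and `X φ'` has
    -- `(r + 1)`-st coefficient `(r + 1) [X ^ (r + 1)] φ`.
    have hSP : S * S⁻¹ ^ (r + 2) = S⁻¹ ^ (r + 1) := by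
      rw [pow_succ', ← mul_assoc, PowerSeries.mul_inv_cancel _ hS, one_mul]
    have hDpow : d⁄dX K (S⁻¹ ^ (r + 1)) = -((r + 1) • (d⁄dX K S * S⁻¹ ^ (r + 2))) := by
      rw [Derivation.leibniz_pow, derivative_inv', Nat.add_sub_cancel, smul_eq_mul]
      ring
    have hcoeff := coeff_derivative (S⁻¹ ^ (r + 1)) r
    rw [hDpow, map_neg, map_nsmul, nsmul_eq_mul] at hcoeff
    have hr : (r + 1 : K) ≠ 0 := by exact_mod_cast r.succ_ne_zero
    rw [hDXS, add_mul, map_add, hSP, mul_assoc, coeff_succ_X_mul, if_neg r.succ_ne_zero]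
    push_cast at hcoeff
    field_simp at hcoeff
    linear_combination -hcoeff

theorem coeff_derivative_X_mul_pow_mul_inv_pow (hS : constantCoeff S ≠ 0) (j k : ℕ) :
    coeff k (d⁄dX K ((X * S) ^ (j + 1)) * S⁻¹ ^ (k + 1))
      = if j = k then (k + 1 : K) else 0 := by
  have hprod : d⁄dX K ((X * S) ^ (j + 1)) * S⁻¹ ^ (k + 1)
      = (j + 1) • (X ^ j * (d⁄dX K (X * S) * (S ^ j * S⁻¹ ^ (k + 1)))) := by
    rw [Derivation.leibniz_pow, Nat.add_sub_cancel, smul_eq_mul, mul_pow]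
    ring
  rw [hprod, map_nsmul, coeff_X_pow_mul', nsmul_eq_mul]
  by_cases hle : j ≤ k
  · obtain ⟨r, rfl⟩ := Nat.exists_eq_add_of_le hle
    have : S ^ j * S⁻¹ ^ (j + r + 1) = S⁻¹ ^ (r + 1) := by
      rw [add_assoc, pow_add, ← mul_assoc, ← mul_pow, PowerSeries.mul_inv_cancel _ hS, one_pow,
        one_mul]
    rw [if_pos hle, this, Nat.add_sub_cancel_left, coeff_derivative_X_mul_mul_inv_pow hS]
    rcases r with _ | r
    · simp
    · rw [if_neg r.succ_ne_zero, if_neg (by omega), mul_zero]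
  · rw [if_neg hle, if_neg (by omega), mul_zero]

theorem lagrange_inversion (hS : constantCoeff S ≠ 0) (b : ℕ → K) (k : ℕ)
    (hb : X ^ (k + 2) ∣ ∑ i ∈ range (k + 2), C (b i) * (X * S) ^ i - X) :
    (k + 1) * b (k + 1) = coeff k (S⁻¹ ^ (k + 1)) := by
  set F := ∑ i ∈ range (k + 2), C (b i) * (X * S) ^ i with hF
  have hDF : X ^ (k + 1) ∣ d⁄dX K F - 1 := by
    obtain ⟨G, hG⟩ := hb
    refine ⟨(k + 2) • G + X * d⁄dX K G, ?_⟩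
    rw [← derivative_X (R := K), ← map_sub, hG, Derivation.leibniz, Derivation.leibniz_pow]
    simp only [smul_eq_mul, nsmul_eq_mul, derivative_X]
    push_cast
    ring
  have hres : coeff k (d⁄dX K F * S⁻¹ ^ (k + 1)) = coeff k (S⁻¹ ^ (k + 1)) := by
    obtain ⟨G, hG⟩ := hDF
    rw [← sub_eq_zero, ← map_sub, ← sub_one_mul, hG, mul_assoc, coeff_X_pow_mul',
      if_neg (by omega)]
  rw [← hres, hF, Finset.sum_range_succ', map_add, map_sum]
  simp only [pow_zero, mul_one, derivative_C, add_zero, Finset.sum_mul, map_sum,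
    Derivation.leibniz, smul_eq_mul, mul_zero, mul_assoc, coeff_C_mul,
    coeff_derivative_X_mul_pow_mul_inv_pow hS, mul_ite]
  rw [Finset.sum_ite_eq' _ _ (fun j => b (j + 1) * (k + 1)), if_pos (self_mem_range_succ k),
    mul_comm]

end Lagrange

section SubProbability

theorem sum_range_coeff_mul_le {A B : ℝ⟦X⟧} (hA : ∀ i, 0 ≤ coeff i A)
    (hB : ∀ i, 0 ≤ coeff i B) (M : ℕ) :
    ∑ i ∈ range M, coeff i (A * B)
      ≤ (∑ i ∈ range M, coeff i A) * ∑ i ∈ range M, coeff i B := by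
  simp only [coeff_mul, sum_mul_sum, ← sum_product']
  rw [← sum_biUnion]
  · refine sum_le_sum_of_subset_of_nonneg ?_ fun p _ _ => mul_nonneg (hA _) (hB _)
    intro p hp
    simp only [mem_biUnion, mem_range, HasAntidiagonal.mem_antidiagonal] at hp
    simp only [mem_product, mem_range]
    omega
  · intro i _ j _ hij
    exact disjoint_left.2 fun p hpi hpj => hij ((HasAntidiagonal.mem_antidiagonal.1 hpi).symm.trans
      (HasAntidiagonal.mem_antidiagonal.1 hpj))

theorem coeff_mul_nonneg {A B : ℝ⟦X⟧} (hA : ∀ i, 0 ≤ coeff i A) (hB : ∀ i, 0 ≤ coeff i B)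
    (n : ℕ) :
    0 ≤ coeff n (A * B) := by
  rw [coeff_mul]
  exact sum_nonneg fun p _ => mul_nonneg (hA _) (hB _)

theorem sum_range_coeff_X_mul_le {A : ℝ⟦X⟧} (hA : ∀ i, 0 ≤ coeff i A) (M : ℕ) :
    ∑ i ∈ range M, coeff i (X * A) ≤ ∑ i ∈ range M, coeff i A := by
  rcases M with _ | M
  · simp
  · rw [sum_range_succ', sum_range_succ]
    simp only [coeff_succ_X_mul, coeff_zero_eq_constantCoeff, map_mul, constantCoeff_X, zero_mul,
      add_zero]
    exact le_add_of_nonneg_right (hA M)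

structure IsSubProbability (φ : ℝ⟦X⟧) : Prop where
  coeff_nonneg : ∀ i, 0 ≤ coeff i φ
  sum_coeff_le_one : ∀ M, ∑ i ∈ range M, coeff i φ ≤ 1

namespace IsSubProbability

theorem one : IsSubProbability 1 where
  coeff_nonneg i := by rw [coeff_one]; split_ifs <;> norm_num
  sum_coeff_le_one M := by
    rcases M with _ | M
    · simp
    · simp [coeff_one]

theorem mul {A B : ℝ⟦X⟧} (hA : IsSubProbability A) (hB : IsSubProbability B) :
    IsSubProbability (A * B) where
  coeff_nonneg := coeff_mul_nonneg hA.coeff_nonneg hB.coeff_nonneg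
  sum_coeff_le_one M :=
    (sum_range_coeff_mul_le hA.coeff_nonneg hB.coeff_nonneg M).trans <|
      mul_le_one₀ (hA.sum_coeff_le_one M) (sum_nonneg fun i _ => hB.coeff_nonneg i)
        (hB.sum_coeff_le_one M)

theorem pow {A : ℝ⟦X⟧} (hA : IsSubProbability A) (n : ℕ) : IsSubProbability (A ^ n) := by
  induction n with
  | zero => exact pow_zero A ▸ one
  | succ n ih => exact pow_succ A n ▸ ih.mul hA

theorem coeff_le_one {A : ℝ⟦X⟧} (hA : IsSubProbability A) (i : ℕ) : coeff i A ≤ 1 :=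
  (single_le_sum (fun j _ => hA.coeff_nonneg j) (self_mem_range_succ i)).trans
    (hA.sum_coeff_le_one (i + 1))

/-- The recursion satisfied by `S⁻¹` when `S = C c₀ - X * U`. -/
theorem of_C_mul_eq {P U : ℝ⟦X⟧} {c₀ : ℝ} (hU : ∀ i, 0 ≤ coeff i U)
    (hUsum : ∀ M, ∑ i ∈ range M, coeff i U ≤ c₀ - 1) (hP : C c₀ * P = 1 + X * (U * P)) :
    IsSubProbability P := by
  have hc₀ : 0 < c₀ := by linarith [hUsum 0, sum_range_zero (fun i => coeff i U)]
  have hcoeff : ∀ i, c₀ * coeff i P = coeff i 1 + coeff i (X * (U * P)) := fun i => by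
    rw [← coeff_C_mul, hP, map_add]
  have hnonneg : ∀ i, 0 ≤ coeff i P := by
    intro i
    induction i using Nat.strong_induction_on with
    | _ i ih =>
      refine (mul_nonneg_iff_of_pos_left hc₀).1 ?_
      rw [hcoeff]
      rcases i with _ | i
      · simp
      · rw [coeff_succ_X_mul, coeff_mul, coeff_one, if_neg i.succ_ne_zero, zero_add]
        refine sum_nonneg fun p hp => mul_nonneg (hU _) (ih _ ?_)
        have := HasAntidiagonal.mem_antidiagonal.1 hp
        omega
  refine ⟨hnonneg, fun M => ?_⟩
  set T := ∑ i ∈ range M, coeff i P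
  have hmass : c₀ * T ≤ 1 + (c₀ - 1) * T := calc
    c₀ * T = ∑ i ∈ range M, coeff i 1 + ∑ i ∈ range M, coeff i (X * (U * P)) := by
      rw [mul_sum, ← sum_add_distrib]
      exact sum_congr rfl fun i _ => hcoeff i
    _ ≤ 1 + (∑ i ∈ range M, coeff i U) * T := by
      gcongr
      · exact IsSubProbability.one.sum_coeff_le_one M
      · exact (sum_range_coeff_X_mul_le (coeff_mul_nonneg hU hnonneg) M).trans
          (sum_range_coeff_mul_le hU hnonneg M)
    _ ≤ 1 + (c₀ - 1) * T := by
      gcongr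
      · exact sum_nonneg fun i _ => hnonneg i
      · exact hUsum M
  nlinarith

end IsSubProbability

theorem isSubProbability_inv {S : ℝ⟦X⟧} (hneg : ∀ i, coeff (i + 1) S ≤ 0)
    (hsum : HasSum (fun i => coeff i S) 1) : IsSubProbability S⁻¹ := by
  set c₀ := constantCoeff S
  set U := mk fun i => -coeff (i + 1) S
  have htail : HasSum (fun i => coeff i U) (c₀ - 1) := by
    simpa [U, c₀] using ((hasSum_nat_add_iff' 1).2 hsum).neg
  have hU : ∀ i, 0 ≤ coeff i U := fun i => by simpa [U] using hneg i
  have hUsum : ∀ M, ∑ i ∈ range M, coeff i U ≤ c₀ - 1 := fun M =>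
    sum_le_hasSum _ (fun i _ => hU i) htail
  have hS : S = C c₀ - X * U := by
    ext (_ | i) <;> simp [U, c₀, coeff_succ_X_mul]
  have hc₀ : c₀ ≠ 0 := by linarith [hUsum 0, sum_range_zero (fun i => coeff i U)]
  refine .of_C_mul_eq hU hUsum ?_
  linear_combination PowerSeries.mul_inv_cancel S hc₀ - S⁻¹ * hS

end SubProbability

end PowerSeries

theorem ContDiffAt.isBigO_comp_sub_comp {𝕂 E F α : Type*} [RCLike 𝕂] [NormedAddCommGroup E]
    [NormedSpace 𝕂 E] [NormedAddCommGroup F] [NormedSpace 𝕂 F] {φ : E → F} {z : E}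
    (hφ : ContDiffAt 𝕂 1 φ z) {l : Filter α} {u v : α → E} (hu : Tendsto u l (𝓝 z))
    (hv : Tendsto v l (𝓝 z)) : (fun x => φ (u x) - φ (v x)) =O[l] fun x => u x - v x := by
  obtain ⟨K, t, ht, hK⟩ := hφ.exists_lipschitzOnWith
  refine IsBigO.of_bound K ?_
  filter_upwards [hu ht, hv ht] with x hux hvx
  simpa only [dist_eq_norm] using hK.dist_le_mul _ hux _ hvx

theorem Polynomial.X_pow_dvd_of_isBigO {p : Polynomial ℝ} {N : ℕ}
    (hp : (fun x => p.eval x) =O[𝓝[≠] 0] fun x => x ^ N) : Polynomial.X ^ N ∣ p := by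
  induction N generalizing p with
  | zero => simp
  | succ N ih =>
    have hp0 : p.eval 0 = 0 := by
      refine tendsto_nhds_unique (l := 𝓝[≠] (0 : ℝ))
        (p.continuous.tendsto 0 |>.mono_left nhdsWithin_le_nhds) ?_
      refine hp.trans_tendsto ?_
      simpa using ((continuous_pow (N + 1)).tendsto (0 : ℝ)).mono_left nhdsWithin_le_nhds
    obtain ⟨q, rfl⟩ : X ∣ p := X_dvd_iff.2 (by rwa [coeff_zero_eq_eval_zero])
    rw [pow_succ']
    refine mul_dvd_mul_left X (ih ?_)
    have := (isBigO_refl (fun x : ℝ => x⁻¹) _).mul hp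
    refine this.congr' ?_ ?_ <;> filter_upwards [self_mem_nhdsWithin] with x (hx : x ≠ 0)
    · simp [hx]
    · field_simp
      ring

theorem FormalMultilinearSeries.partialSum_ofScalars (c : ℕ → ℝ) (n : ℕ) (y : ℝ) :
    (ofScalars ℝ c).partialSum n y = ∑ i ∈ Finset.range n, c i * y ^ i := by
  simp [partialSum, mul_comm]

theorem FormalMultilinearSeries.le_radius_ofScalars_of_summable {a : ℕ → ℝ} {x : ℝ}
    (h : Summable fun i => a i * x ^ i) : (‖x‖₊ : ℝ≥0∞) ≤ (ofScalars ℝ a).radius :=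
  (ofScalars ℝ a).le_radius_of_tendsto (l := 0) <| by
    simpa [ofScalars_norm, abs_mul] using h.tendsto_atTop_zero.norm

theorem hasFPowerSeriesOnBall_ofScalars {a : ℕ → ℝ} {f : ℝ → ℝ} {r : ℝ≥0}
    (hr : 0 < r) (hf : ∀ x : ℝ, |x| < r → HasSum (fun i => a i * x ^ i) (f x)) :
    HasFPowerSeriesOnBall f (ofScalars ℝ a) 0 r where
  r_le := ENNReal.le_of_forall_nnreal_lt fun s hs => by
    have hs' : |(s : ℝ)| < r := by simpa using hs
    simpa using le_radius_ofScalars_of_summable (hf s hs').summable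
  r_pos := by simpa using hr
  hasSum {y} hy := by
    rw [← ENNReal.ofReal_coe_nnreal, Metric.eball_ofReal, mem_ball_zero_iff,
      Real.norm_eq_abs] at hy
    simpa [mul_comm] using hf y hy

theorem hasFPowerSeriesAt_ofScalarsSum {a : ℕ → ℝ} {x : ℝ} (hx : x ≠ 0)
    (h : Summable fun i => a i * x ^ i) :
    HasFPowerSeriesAt (ofScalarsSum a) (ofScalars ℝ a) 0 :=
  have hx' : (0 : ℝ≥0∞) < ‖x‖₊ := by simpa using hx
  ((ofScalars ℝ a).hasFPowerSeriesOnBall <|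
    hx'.trans_le (le_radius_ofScalars_of_summable h)).hasFPowerSeriesAt

namespace PowerSeries

open Finset

theorem isBigO_eval_sum_C_mul_trunc_pow_sub_X {f g : ℝ → ℝ} {a b : ℕ → ℝ}
    (hf : HasFPowerSeriesAt f (ofScalars ℝ a) 0) (hg : HasFPowerSeriesAt g (ofScalars ℝ b) 0)
    (ha : a 0 = 0) (hgf : ∀ᶠ x in 𝓝 0, g (f x) = x) (N : ℕ) :
    (fun x => (∑ i ∈ range N, Polynomial.C (b i) * trunc N (mk a) ^ i - Polynomial.X).eval x)
      =O[𝓝 0] fun x => x ^ N := by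
  set A := trunc N (mk a)
  have hA : ∀ y, A.eval y = ∑ i ∈ range N, a i * y ^ i := fun y => by
    simp [A, Polynomial.eval, eval₂_trunc_eq_sum_range]
  set B : ℝ → ℝ := fun y => ∑ i ∈ range N, b i * y ^ i
  have hf1 : f =O[𝓝 0] fun x => x := isBigO_abs_right.1 <| by
    simpa [partialSum_ofScalars, ha] using hf.isBigO_sub_partialSum_pow 1
  have hf0 : Tendsto f (𝓝 0) (𝓝 0) := hf1.trans_tendsto tendsto_id
  have hA0 : Tendsto A.eval (𝓝 0) (𝓝 0) := by
    simpa [← Polynomial.coeff_zero_eq_eval_zero, A, coeff_trunc, ha] using A.continuous.tendsto 0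
  have hfA : (fun x => f x - A.eval x) =O[𝓝 0] fun x => x ^ N := isBigO_abs_right.1 <| by
    simpa [partialSum_ofScalars, hA] using hf.isBigO_sub_partialSum_pow N
  have hgB : (fun x => g (f x) - B (f x)) =O[𝓝 0] fun x => x ^ N := by
    have := (hg.isBigO_sub_partialSum_pow N).comp_tendsto hf0
    simp only [Function.comp_def, zero_add, partialSum_ofScalars] at this
    exact this.trans (by simpa using (hf1.pow N).norm_left)
  have hB : ContDiffAt ℝ 1 B 0 := by
    show ContDiffAt ℝ 1 (fun y => ∑ i ∈ range N, b i * y ^ i) 0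
    fun_prop
  have hBA : (fun x => B (f x) - B (A.eval x)) =O[𝓝 0] fun x => x ^ N :=
    (hB.isBigO_comp_sub_comp hf0 hA0).trans hfA
  refine (hBA.neg_left.sub hgB).congr' ?_ EventuallyEq.rfl
  filter_upwards [hgf] with x hx
  simp [B, Polynomial.eval_finsetSum, hx]

theorem X_pow_dvd_sum_C_mul_pow_sub_X_of_trunc {R : Type*} [CommRing R] {φ : R⟦X⟧}
    {b : ℕ → R} {N : ℕ}
    (h : Polynomial.X ^ N ∣
      ∑ i ∈ range N, Polynomial.C (b i) * trunc N φ ^ i - Polynomial.X) :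
    X ^ N ∣ ∑ i ∈ range N, C (b i) * φ ^ i - X := by
  have hcoe : X ^ N ∣ ∑ i ∈ range N, C (b i) * (trunc N φ : R⟦X⟧) ^ i - X := by
    simpa only [map_pow, map_sub, map_sum, map_mul, Polynomial.coeToPowerSeries.ringHom_apply,
      Polynomial.coe_C, Polynomial.coe_X] using map_dvd Polynomial.coeToPowerSeries.ringHom h
  have htrunc : (X : R⟦X⟧) ^ N ∣ φ - trunc N φ :=
    ⟨_, sub_eq_iff_eq_add.2 (eq_X_pow_mul_shift_add_trunc N φ)⟩
  have hsplit : ∑ i ∈ range N, C (b i) * φ ^ i - X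
      = (∑ i ∈ range N, C (b i) * (trunc N φ : R⟦X⟧) ^ i - X)
        + ∑ i ∈ range N, C (b i) * (φ ^ i - (trunc N φ : R⟦X⟧) ^ i) := by
    simp only [mul_sub, sum_sub_distrib]
    ring
  rw [hsplit]
  exact dvd_add hcoe (dvd_sum fun i _ =>
    dvd_mul_of_dvd_right (htrunc.trans (sub_dvd_pow_sub_pow _ _ _)) _)

theorem X_pow_dvd_sum_C_mul_pow_sub_X {f g : ℝ → ℝ} {a b : ℕ → ℝ}
    (hf : HasFPowerSeriesAt f (ofScalars ℝ a) 0) (hg : HasFPowerSeriesAt g (ofScalars ℝ b) 0)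
    (ha : a 0 = 0) (hgf : ∀ᶠ x in 𝓝 0, g (f x) = x) (N : ℕ) :
    X ^ N ∣ ∑ i ∈ range N, C (b i) * mk a ^ i - X :=
  X_pow_dvd_sum_C_mul_pow_sub_X_of_trunc <| Polynomial.X_pow_dvd_of_isBigO <|
    (isBigO_eval_sum_C_mul_trunc_pow_sub_X hf hg ha hgf N).mono nhdsWithin_le_nhds

end PowerSeries

def oddCoeffs (c : ℕ → ℝ) (i : ℕ) : ℝ := if Odd i then c (i / 2) else 0

@[simp] theorem oddCoeffs_two_mul (c : ℕ → ℝ) (k : ℕ) : oddCoeffs c (2 * k) = 0 := by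
  simp [oddCoeffs]

@[simp] theorem oddCoeffs_two_mul_add_one (c : ℕ → ℝ) (k : ℕ) :
    oddCoeffs c (2 * k + 1) = c k := by
  simp [oddCoeffs, Nat.mul_add_div]

theorem hasSum_oddCoeffs_mul_pow {c : ℕ → ℝ} {x s : ℝ}
    (h : HasSum (fun k => c k * x ^ (2 * k + 1)) s) :
    HasSum (fun i => oddCoeffs c i * x ^ i) s := by
  simpa using HasSum.even_add_odd (f := fun i => oddCoeffs c i * x ^ i) (m := 0)
    (by simp) (by simpa using h)

namespace PowerSeries

theorem isSubProbability_inv_mk_oddCoeffs_succ {c : ℕ → ℝ} (hc : ∀ k, 0 < k → c k ≤ 0)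
    (hc1 : HasSum c 1) : IsSubProbability (mk fun i => oddCoeffs c (i + 1))⁻¹ := by
  refine isSubProbability_inv (fun i => ?_) ?_
  · simp only [coeff_mk, oddCoeffs]
    split_ifs
    · exact hc _ (by omega)
    · rfl
  · have := (hasSum_nat_add_iff' 1).2 (hasSum_oddCoeffs_mul_pow (x := 1) (by simpa using hc1))
    simpa [oddCoeffs] using this

theorem X_pow_dvd_sum_oddCoeffs_sub_X {h : ℝ → ℝ} {c d : ℕ → ℝ}
    (hsum : ∀ x ∈ Set.Ioo (-1 : ℝ) 1, HasSum (fun k => c k * x ^ (2 * k + 1)) (h x))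
    (hinv : ∃ ε > (0 : ℝ), ∀ x : ℝ, |x| < ε →
      HasSum (fun k => d k * h x ^ (2 * k + 1)) x) (N : ℕ) :
    X ^ N ∣ ∑ i ∈ Finset.range N, C (oddCoeffs d i) * mk (oddCoeffs c) ^ i - X := by
  obtain ⟨ε, hε, hinv⟩ := hinv
  have hf : HasFPowerSeriesAt h (ofScalars ℝ (oddCoeffs c)) 0 :=
    (hasFPowerSeriesOnBall_ofScalars one_pos fun x hx =>
      hasSum_oddCoeffs_mul_pow (hsum x (abs_lt.1 (by simpa using hx)))).hasFPowerSeriesAt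
  have hx : |ε / 2| < ε := by rw [abs_of_pos (by positivity)]; linarith
  -- The `d`-series converges at `h (ε / 2)`, which is nonzero since the series sums to `ε / 2`.
  have hhx : h (ε / 2) ≠ 0 := fun h0 => by
    have h0' : HasSum (fun _ : ℕ => (0 : ℝ)) (ε / 2) := by simpa [h0] using hinv _ hx
    linarith [h0'.unique hasSum_zero]
  refine X_pow_dvd_sum_C_mul_pow_sub_X hf
    (hasFPowerSeriesAt_ofScalarsSum hhx (hasSum_oddCoeffs_mul_pow (hinv _ hx)).summable)
    (by simp [oddCoeffs]) ?_ N
  filter_upwards [Metric.ball_mem_nhds 0 hε] with x hx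
  rw [ofScalars_sum_eq]
  simpa using (hasSum_oddCoeffs_mul_pow (hinv x (by simpa using hx))).tsum_eq

end PowerSeries

open Set in
theorem stmt_9 (h : ℝ → ℝ) (c d : ℕ → ℝ)
    (hc0 : 0 < c 0) (hc : ∀ k : ℕ, 0 < k → c k ≤ 0) (hc1 : HasSum c 1)
    (hsum : ∀ x ∈ Ioo (-1 : ℝ) 1, HasSum (fun k : ℕ => c k * x ^ (2 * k + 1)) (h x))
    (hinv : ∃ ε > (0 : ℝ), ∀ x : ℝ, |x| < ε →
      HasSum (fun k : ℕ => d k * (h x) ^ (2 * k + 1)) x) :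
    ∀ k : ℕ, 0 ≤ d k ∧ d k ≤ 1 / (2 * k + 1) := by
  intro n
  set S := PowerSeries.mk fun i => oddCoeffs c (i + 1)
  have hXS : PowerSeries.X * S = PowerSeries.mk (oddCoeffs c) := by
    ext (_ | i) <;> simp [S, PowerSeries.coeff_succ_X_mul, oddCoeffs]
  have hS0 : PowerSeries.constantCoeff S ≠ 0 := by simpa [S, oddCoeffs] using hc0.ne'
  have hlag := PowerSeries.lagrange_inversion hS0 (oddCoeffs d) (2 * n)
    (hXS ▸ PowerSeries.X_pow_dvd_sum_oddCoeffs_sub_X hsum hinv _)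
  rw [oddCoeffs_two_mul_add_one] at hlag
  push_cast at hlag
  have hP := (PowerSeries.isSubProbability_inv_mk_oddCoeffs_succ hc hc1).pow (2 * n + 1)
  have h0 := hP.coeff_nonneg (2 * n)
  have h1 := hP.coeff_le_one (2 * n)
  refine ⟨by nlinarith, ?_⟩
  rw [le_div_iff₀ (by positivity)]
  linarith
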